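/- On the infinite rooted k-ary tree with k ≥ 2, for the weight w_{−1}(x) = Σ_{j≥0} k^{−j} χ_{T^j}(x) and any γ > 1, the inequality M_γ w_{−1}(x) ≲ w_{−1}(x) fails: for x ∈ T^j, the γ-average over S(x,r) satisfies ((1/|S(x,r)|) Σ_{y∈S(x,r)} w_{−1}(y)^γ)^{1/γ} ≳ k^{−j} k^{(γ−1)r/γ}, which is unbounded in r relative to w_{−1}(x) = k^{−j}. -/

import Mathlib

/-!
The ancestor of `x ∈ T^j` at distance `r` lies on `S(x,r)` and has weight `k^{r-j}`, while
`|S(x,r)| ≤ k^{r+1}`: a point of the sphere is determined by its part below its deepest common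
ancestor with `x`, a word of length at most `r`. Keeping only that one term of the `γ`-average gives
the lower bound. For the second claim, the ball `B(x,j)` contains the root, where `w_{-1} = 1`, and
`|B(x,j)| ≤ k^{j+2}`, so `M_γ w_{-1}(x) ≥ k^{-(j+2)/γ}`, which outgrows `C k^{-j}` since `γ > 1`.
-/

open scoped ENNReal NNReal BigOperators

noncomputable section

/-- Vertices of the infinite rooted `k`-ary tree: finite words over `Fin k`. -/
abbrev V (k : ℕ) := List (Fin k)

/-- Length of the longest common prefix (depth of the deepest common ancestor). -/
def lcpLen {k : ℕ} : List (Fin k) → List (Fin k) → ℕ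
  | a :: as, b :: bs => if a = b then lcpLen as bs + 1 else 0
  | _, _ => 0

/-- Graph distance on the infinite rooted `k`-ary tree. -/
def tdist {k : ℕ} (x y : V k) : ℕ :=
  (x.length - lcpLen x y) + (y.length - lcpLen x y)

/-- Sphere of radius `r` centered at `x`. -/
def sph {k : ℕ} (x : V k) (r : ℕ) : Set (V k) := {y | tdist x y = r}

/-- Closed ball of radius `r` centered at `x`. -/
def ball {k : ℕ} (x : V k) (r : ℕ) : Set (V k) := {y | tdist x y ≤ r}

def sphCard {k : ℕ} (x : V k) (r : ℕ) : ℝ≥0∞ := ((sph x r).ncard : ℝ≥0∞)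
def ballCard {k : ℕ} (x : V k) (r : ℕ) : ℝ≥0∞ := ((ball x r).ncard : ℝ≥0∞)

/-- `w(A) = Σ_{y ∈ A} w(y)`, the weighted (counting) measure of `A`. -/
def wsum {k : ℕ} (w : V k → ℝ≥0∞) (A : Set (V k)) : ℝ≥0∞ := ∑' y : A, w ↑y

/-- Spherical average `A_r° f (x)`. -/
def sphAvg {k : ℕ} (f : V k → ℝ≥0∞) (x : V k) (r : ℕ) : ℝ≥0∞ :=
  wsum f (sph x r) / sphCard x r

/-- Spherical maximal operator `M°`. -/
def Msph {k : ℕ} (f : V k → ℝ≥0∞) (x : V k) : ℝ≥0∞ := ⨆ r : ℕ, sphAvg f x r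

/-- Centered Hardy–Littlewood maximal operator `M`. -/
def Mball {k : ℕ} (f : V k → ℝ≥0∞) (x : V k) : ℝ≥0∞ :=
  ⨆ r : ℕ, wsum f (ball x r) / ballCard x r

/-- `|f|` of a real-valued function, as an `ℝ≥0∞`-valued function. -/
def absE {k : ℕ} (f : V k → ℝ) : V k → ℝ≥0∞ := fun y => ENNReal.ofReal |f y|

/-- `M_s w = (M(w^s))^{1/s}` (centered version). -/
def MsBall {k : ℕ} (s : ℝ) (w : V k → ℝ≥0∞) (x : V k) : ℝ≥0∞ :=
  (Mball (fun y => w y ^ s) x) ^ (1 / s)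

/-- `M_s° w = (M°(w^s))^{1/s}` (spherical version). -/
def MsSph {k : ℕ} (s : ℝ) (w : V k → ℝ≥0∞) (x : V k) : ℝ≥0∞ :=
  (Msph (fun y => w y ^ s) x) ^ (1 / s)

/-- The radial weight `w_{-1}(x) = k^{-depth x}`. -/
def wm (k : ℕ) : V k → ℝ≥0∞ := fun x => (k : ℝ≥0∞) ^ (-(x.length : ℝ))

lemma lcpLen_le_length_left {k : ℕ} : ∀ x y : V k, lcpLen x y ≤ x.length
  | [], _ | _ :: _, [] => by simp [lcpLen]
  | a :: as, b :: bs => by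
      simp only [lcpLen, List.length_cons]
      split
      · exact Nat.succ_le_succ (lcpLen_le_length_left as bs)
      · omega

lemma take_lcpLen_eq {k : ℕ} : ∀ x y : V k, x.take (lcpLen x y) = y.take (lcpLen x y)
  | [], _ | _ :: _, [] => by simp [lcpLen]
  | a :: as, b :: bs => by
      simp only [lcpLen]
      split
      · next h => simp [h, take_lcpLen_eq as bs]
      · simp

lemma lcpLen_take {k : ℕ} : ∀ (x : V k) (m : ℕ), lcpLen x (x.take m) = min m x.length
  | [], _ | _ :: _, 0 => by simp [lcpLen]
  | a :: as, m + 1 => by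
      simp only [List.take_succ_cons, lcpLen, if_true, lcpLen_take as m, List.length_cons]
      omega

lemma take_lcpLen_append_drop {k : ℕ} (x y : V k) :
    x.take (lcpLen x y) ++ y.drop (lcpLen x y) = y := by
  rw [take_lcpLen_eq, List.take_append_drop]

lemma take_mem_sph {k : ℕ} (x : V k) {r : ℕ} (hr : r ≤ x.length) :
    x.take (x.length - r) ∈ sph x r := by
  change tdist x _ = r
  rw [tdist, lcpLen_take, List.length_take]
  omega

lemma List.ncard_setOf_length_eq (α : Type*) [Fintype α] (n : ℕ) :
    {l : List α | l.length = n}.ncard = Fintype.card α ^ n := by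
  rw [← Nat.card_coe_set_eq, ← card_vector, ← Nat.card_eq_fintype_card]
  rfl

lemma List.ncard_setOf_length_le_lt_pow {α : Type*} [Fintype α] (hα : 2 ≤ Fintype.card α)
    (n : ℕ) : {l : List α | l.length ≤ n}.ncard < Fintype.card α ^ (n + 1) := by
  have hunion : {l : List α | l.length ≤ n} = ⋃ i ∈ Finset.range (n + 1), {l | l.length = i} := by
    ext l; simp
  calc {l : List α | l.length ≤ n}.ncard
      ≤ ∑ i ∈ Finset.range (n + 1), {l : List α | l.length = i}.ncard := by
        rw [hunion]; exact Finset.set_ncard_biUnion_le _ _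
    _ = ∑ i ∈ Finset.range (n + 1), Fintype.card α ^ i := by
        simp only [List.ncard_setOf_length_eq]
    _ < Fintype.card α ^ (n + 1) := Nat.geomSum_lt hα (by simp)

lemma ncard_sph_le {k : ℕ} (hk : 2 ≤ k) (x : V k) (r : ℕ) : (sph x r).ncard ≤ k ^ (r + 1) := by
  have hlen : ∀ y ∈ sph x r, y.length - lcpLen x y + (x.length - lcpLen x y) = r := by
    intro y hy; change tdist x y = r at hy; rw [tdist] at hy; omega
  have hinj : Set.InjOn (fun y : V k => y.drop (lcpLen x y)) (sph x r) := by
    intro y₁ hy₁ y₂ hy₂ hdrop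
    have hdrop : y₁.drop (lcpLen x y₁) = y₂.drop (lcpLen x y₂) := hdrop
    have hlcp : lcpLen x y₁ = lcpLen x y₂ := by
      have := congrArg List.length hdrop
      simp only [List.length_drop] at this
      have := hlen y₁ hy₁; have := hlen y₂ hy₂
      have := lcpLen_le_length_left x y₁; have := lcpLen_le_length_left x y₂
      omega
    rw [← take_lcpLen_append_drop x y₁, ← take_lcpLen_append_drop x y₂, hdrop, hlcp]
  have hmaps : ∀ y ∈ sph x r, y.drop (lcpLen x y) ∈ {l : V k | l.length ≤ r} := by
    intro y hy
    have := hlen y hy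
    simp only [Set.mem_ofPred_eq, List.length_drop]
    omega
  have hcard := List.ncard_setOf_length_le_lt_pow (α := Fin k) (by simpa using hk) r
  rw [Fintype.card_fin] at hcard
  exact (Set.ncard_le_ncard_of_injOn _ hmaps hinj (List.finite_length_le _ r)).trans hcard.le

lemma ball_eq_biUnion_sph {k : ℕ} (x : V k) (r : ℕ) :
    ball x r = ⋃ s ∈ Finset.range (r + 1), sph x s := by
  ext y; simp [ball, sph]

lemma ncard_ball_le {k : ℕ} (hk : 2 ≤ k) (x : V k) (r : ℕ) : (ball x r).ncard ≤ k ^ (r + 2) :=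
  calc (ball x r).ncard
      ≤ ∑ s ∈ Finset.range (r + 1), (sph x s).ncard := by
        rw [ball_eq_biUnion_sph]; exact Finset.set_ncard_biUnion_le _ _
    _ ≤ ∑ s ∈ Finset.range (r + 1), k * k ^ s :=
        Finset.sum_le_sum fun s _ => (ncard_sph_le hk x s).trans_eq (pow_succ' k s)
    _ ≤ k ^ (r + 2) := by
        rw [← Finset.mul_sum, pow_succ' k (r + 1)]
        exact Nat.mul_le_mul_left k (Nat.geomSum_lt hk (by simp)).le

lemma le_wsum_of_mem {k : ℕ} (w : V k → ℝ≥0∞) {A : Set (V k)} {y : V k} (hy : y ∈ A) :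
    w y ≤ wsum w A :=
  ENNReal.le_tsum (⟨y, hy⟩ : A)

lemma rpow_le_sphAvg_wm_rpow {k : ℕ} (hk : 2 ≤ k) {γ : ℝ} (hγ : 0 < γ) (x : V k) {r : ℕ}
    (hr : r ≤ x.length) :
    (k : ℝ≥0∞) ^ (-1 / γ) * ((k : ℝ≥0∞) ^ (-(x.length : ℝ)) *
        (k : ℝ≥0∞) ^ ((γ - 1) * (r : ℝ) / γ)) ≤
      (sphAvg (fun y => wm k y ^ γ) x r) ^ (1 / γ) := by
  have hK0 : (k : ℝ≥0∞) ≠ 0 := by norm_cast; omega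
  have hKt : (k : ℝ≥0∞) ≠ ⊤ := ENNReal.natCast_ne_top k
  set a := x.take (x.length - r)
  have ha_len : (a.length : ℝ) = x.length - r := by
    rw [List.length_take, min_eq_left (Nat.sub_le _ _), Nat.cast_sub hr]
  have hcard : sphCard x r ≤ (k : ℝ≥0∞) ^ ((r : ℝ) + 1) := by
    rw [sphCard, ← Nat.cast_add_one, ENNReal.rpow_natCast]
    exact_mod_cast ncard_sph_le hk x r
  have havg : (k : ℝ≥0∞) ^ (-(a.length : ℝ) * γ - ((r : ℝ) + 1)) ≤
      sphAvg (fun y => wm k y ^ γ) x r :=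
    calc (k : ℝ≥0∞) ^ (-(a.length : ℝ) * γ - ((r : ℝ) + 1))
        = wm k a ^ γ / (k : ℝ≥0∞) ^ ((r : ℝ) + 1) := by
          rw [ENNReal.rpow_sub _ _ hK0 hKt, wm, ← ENNReal.rpow_mul]
      _ ≤ sphAvg (fun y => wm k y ^ γ) x r :=
          ENNReal.div_le_div (le_wsum_of_mem _ (take_mem_sph x hr)) hcard
  calc (k : ℝ≥0∞) ^ (-1 / γ) * ((k : ℝ≥0∞) ^ (-(x.length : ℝ)) *
        (k : ℝ≥0∞) ^ ((γ - 1) * (r : ℝ) / γ))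
      = ((k : ℝ≥0∞) ^ (-(a.length : ℝ) * γ - ((r : ℝ) + 1))) ^ (1 / γ) := by
        rw [← ENNReal.rpow_add _ _ hK0 hKt, ← ENNReal.rpow_add _ _ hK0 hKt,
          ← ENNReal.rpow_mul, ha_len]
        congr 1
        field_simp
        ring
    _ ≤ (sphAvg (fun y => wm k y ^ γ) x r) ^ (1 / γ) := by gcongr

lemma rpow_le_MsBall_wm {k : ℕ} (hk : 2 ≤ k) {γ : ℝ} (hγ : 0 < γ) (x : V k) :
    (k : ℝ≥0∞) ^ (-((x.length : ℝ) + 2) / γ) ≤ MsBall γ (wm k) x := by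
  have hroot : [] ∈ ball x x.length := by
    have := take_mem_sph x le_rfl
    rw [Nat.sub_self, List.take_zero] at this
    exact le_of_eq this
  have hcard : ballCard x x.length ≤ (k : ℝ≥0∞) ^ ((x.length : ℝ) + 2) := by
    rw [ballCard, ← Nat.cast_ofNat, ← Nat.cast_add, ENNReal.rpow_natCast]
    exact_mod_cast ncard_ball_le hk x x.length
  have havg : (k : ℝ≥0∞) ^ (-((x.length : ℝ) + 2)) ≤ Mball (fun y => wm k y ^ γ) x :=
    calc (k : ℝ≥0∞) ^ (-((x.length : ℝ) + 2))
        = wm k [] ^ γ / (k : ℝ≥0∞) ^ ((x.length : ℝ) + 2) := by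
          rw [wm, List.length_nil, Nat.cast_zero, neg_zero, ENNReal.rpow_zero, ENNReal.one_rpow,
            one_div, ENNReal.rpow_neg]
      _ ≤ wsum (fun y => wm k y ^ γ) (ball x x.length) / ballCard x x.length :=
          ENNReal.div_le_div (le_wsum_of_mem _ hroot) hcard
      _ ≤ Mball (fun y => wm k y ^ γ) x :=
          le_iSup (fun r => wsum (fun y => wm k y ^ γ) (ball x r) / ballCard x r) _
  calc (k : ℝ≥0∞) ^ (-((x.length : ℝ) + 2) / γ)
      = ((k : ℝ≥0∞) ^ (-((x.length : ℝ) + 2))) ^ (1 / γ) := by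
        rw [← ENNReal.rpow_mul, mul_one_div]
    _ ≤ MsBall γ (wm k) x := by rw [MsBall]; gcongr

/-- For `w_{-1}` and any `γ > 1`, the `γ`-average over spheres satisfies
`((1/|S(x,r)|) Σ_{S(x,r)} w_{-1}^γ)^{1/γ} ≳ k^{-j} k^{(γ-1)r/γ}` (for `x ∈ T^j`,
`r ≤ j`), which is unbounded in `r` relative to `w_{-1}(x) = k^{-j}`; hence
`M_γ w_{-1} ≲ w_{-1}` fails. -/
theorem stmt12 (k : ℕ) (hk : 2 ≤ k) (γ : ℝ) (hγ : 1 < γ) :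
    (∃ c : ℝ≥0, 0 < c ∧ ∀ (x : V k) (r : ℕ), r ≤ x.length →
        (c : ℝ≥0∞) * ((k : ℝ≥0∞) ^ (-(x.length : ℝ)) *
            (k : ℝ≥0∞) ^ ((γ - 1) * (r : ℝ) / γ)) ≤
          (sphAvg (fun y => wm k y ^ γ) x r) ^ (1 / γ)) ∧
    ¬ ∃ C : ℝ≥0, ∀ x : V k, MsBall γ (wm k) x ≤ (C : ℝ≥0∞) * wm k x := by
  have hγ0 : 0 < γ := by linarith
  have hk0 : (k : ℝ≥0) ≠ 0 := by norm_cast; omega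
  have hK0 : (k : ℝ≥0∞) ≠ 0 := by exact_mod_cast hk0
  have hKt : (k : ℝ≥0∞) ≠ ⊤ := ENNReal.natCast_ne_top k
  refine ⟨⟨(k : ℝ≥0) ^ (-1 / γ), NNReal.rpow_pos (pos_iff_ne_zero.2 hk0), fun x r hr => ?_⟩, ?_⟩
  · rw [ENNReal.coe_rpow_of_ne_zero hk0, ENNReal.coe_natCast]
    exact rpow_le_sphAvg_wm_rpow hk hγ0 x hr
  · rintro ⟨C, hC⟩
    set ρ := (k : ℝ≥0∞) ^ ((γ - 1) / γ)
    have hρ : 1 < ρ := ENNReal.one_lt_rpow (by exact_mod_cast hk) (by apply div_pos <;> linarith)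
    have hbound : ∀ n : ℕ, ρ ^ n ≤ C * (k : ℝ≥0∞) ^ (2 / γ) := by
      intro n
      have hx := (rpow_le_MsBall_wm hk hγ0 (List.replicate n ⟨0, by omega⟩)).trans (hC _)
      rw [wm, List.length_replicate] at hx
      calc ρ ^ n = (k : ℝ≥0∞) ^ (-((n : ℝ) + 2) / γ) * (k : ℝ≥0∞) ^ ((n : ℝ) + 2 / γ) := by
            rw [← ENNReal.rpow_natCast, ← ENNReal.rpow_mul, ← ENNReal.rpow_add _ _ hK0 hKt]
            congr 1
            field_simp
            ring
        _ ≤ C * (k : ℝ≥0∞) ^ (-(n : ℝ)) * (k : ℝ≥0∞) ^ ((n : ℝ) + 2 / γ) := by gcongr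
        _ = C * (k : ℝ≥0∞) ^ (2 / γ) := by
            rw [mul_assoc, ← ENNReal.rpow_add _ _ hK0 hKt, neg_add_cancel_left]
    have hfin : (C : ℝ≥0∞) * (k : ℝ≥0∞) ^ (2 / γ) < ⊤ :=
      ENNReal.mul_lt_top ENNReal.coe_lt_top (ENNReal.rpow_lt_top_of_nonneg (by positivity) hKt)
    obtain ⟨n, hn⟩ :=
      ((ENNReal.tendsto_pow_atTop_nhds_top_iff.2 hρ).eventually (eventually_gt_nhds hfin)).exists
    exact (hbound n).not_gt hn
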